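/- Threshold comparison: the inequality s*(α) − 1/2 < (1−α)/3, where s*(α) is defined piecewise by s*(α) = (1/4)(√(68α²−52α+9) − 10α + 7) for 1 < α ≤ (35+√105)/32 and s*(α) = (1/2)(√(4α²−2α+1) − 2α + 1) for α > (35+√105)/32, holds if and only if 1 < α < (17 + 3√21)/20. -/

import Mathlib

/-!
On the lower branch, clearing the square root reduces the inequality to
`(8α - 5)(α - 1) > 0`, true for every `α > 1`; and that branch ends at
`(35 + √105)/32 < (17 + 3√21)/20`. On the upper branch, it reduces to
`20α² - 34α + 5 < 0`, whose roots are `(17 ± 3√21)/20`, the smaller one lying below `1`.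
-/

/-- The regularity threshold `s*(α)` of the main theorem. -/
noncomputable def sStar (α : ℝ) : ℝ :=
  if α ≤ (35 + Real.sqrt 105) / 32 then
    (1/4) * (Real.sqrt (68*α^2 - 52*α + 9) - 10*α + 7)
  else
    (1/2) * (Real.sqrt (4*α^2 - 2*α + 1) - 2*α + 1)

open Real

lemma branch_point_lt_threshold : (35 + √105) / 32 < (17 + 3 * √21) / 20 := by
  have h105 : √105 < 10.25 := (sqrt_lt' (by norm_num)).2 (by norm_num)
  have h21 : 4.58 < √21 := (lt_sqrt (by norm_num)).2 (by norm_num)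
  linarith

lemma quadratic_neg_iff (α : ℝ) :
    20*α^2 - 34*α + 5 < 0 ↔ (17 - 3 * √21) / 20 < α ∧ α < (17 + 3 * √21) / 20 := by
  have hfac : 20*α^2 - 34*α + 5
      = 20 * ((α - (17 - 3 * √21) / 20) * (α - (17 + 3 * √21) / 20)) := by
    ring_nf
    rw [sq_sqrt (by norm_num)]
    ring
  have hroots : (17 - 3 * √21) / 20 < (17 + 3 * √21) / 20 := by
    have : 0 < √21 := by positivity
    linarith
  rw [hfac, mul_neg_iff]
  constructor
  · rintro (⟨-, h⟩ | ⟨h20, -⟩)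
    · rcases mul_neg_iff.1 h with ⟨h₁, h₂⟩ | ⟨h₁, h₂⟩ <;> constructor <;> linarith
    · norm_num at h20
  · rintro ⟨hlo, hhi⟩
    exact Or.inl ⟨by norm_num, mul_neg_of_pos_of_neg (by linarith) (by linarith)⟩

lemma lower_branch_sub_half_lt {α : ℝ} (hα : 1 < α) :
    (1/4) * (√(68*α^2 - 52*α + 9) - 10*α + 7) - 1/2 < (1 - α)/3 := by
  suffices √(68*α^2 - 52*α + 9) < (26*α - 11)/3 by linarith
  rw [sqrt_lt' (by linarith)]
  -- the gap `((26α - 11)/3)² - (68α² - 52α + 9)` is `(8/9)(8α - 5)(α - 1)`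
  nlinarith [mul_pos (by linarith : (0:ℝ) < 8*α - 5) (sub_pos.2 hα)]

lemma upper_branch_sub_half_lt_iff {α : ℝ} (hα : -1/2 < α) :
    (1/2) * (√(4*α^2 - 2*α + 1) - 2*α + 1) - 1/2 < (1 - α)/3 ↔ 20*α^2 - 34*α + 5 < 0 := by
  calc (1/2) * (√(4*α^2 - 2*α + 1) - 2*α + 1) - 1/2 < (1 - α)/3
      ↔ √(4*α^2 - 2*α + 1) < (4*α + 2)/3 := by constructor <;> intro h <;> linarith
    _ ↔ 4*α^2 - 2*α + 1 < ((4*α + 2)/3)^2 := sqrt_lt' (by linarith)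
    _ ↔ 20*α^2 - 34*α + 5 < 0 := by constructor <;> intro h <;> linarith

/-- Threshold comparison: for `α > 1`, `s*(α) − 1/2 < (1−α)/3` holds if and only if
`α < (17 + 3√21)/20`. -/
theorem threshold_comparison (α : ℝ) (hα : 1 < α) :
    sStar α - 1/2 < (1 - α)/3 ↔ α < (17 + 3 * Real.sqrt 21) / 20 := by
  unfold sStar
  split_ifs with hlow
  · exact iff_of_true (lower_branch_sub_half_lt hα)
      (hlow.trans_lt branch_point_lt_threshold)
  · have hroot : (17 - 3 * √21) / 20 < α := by
      have : 0 ≤ √21 := sqrt_nonneg _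
      linarith
    rw [upper_branch_sub_half_lt_iff (by linarith), quadratic_neg_iff]
    exact and_iff_right hroot
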